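/- arXiv:2603.27572 — 6 statements merged into one kernel-verified Lean document; each statement's English description precedes it below -/
import Mathlib

section
/- Let μ be a finite measure on Ω = ℝ → ℝ (with the product σ-algebra) that is symmetric (T_*μ = μ) and such that for μ-almost every r, 1 ≤ r(x) ≤ e^α for all x; assume the functionals r ↦ ∫_ℝ s(x) r(x) p(x) dx and r ↦ ∫_ℝ r(x) p(x) dx are μ-almost everywhere strongly measurable. Then ∫_Ω i(r) dμ(r) = ∫_Ω i^(s)(r) dμ(r), and this common value equals ((e^α + 1)/2) · ∫_Ω (∫_ℝ s(x) r(x) p(x) dx)² / [(∫_ℝ r(x) p(x) dx) · (e^α + 1 − ∫_ℝ r(x) p(x) dx)] dμ(r). -/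
open MeasureTheory

/-- The symmetry operator `T` swapping the extremal values `1` and `e^α`. -/
noncomputable def T (α : ℝ) (r : ℝ → ℝ) : ℝ → ℝ := fun x => Real.exp α + 1 - r x

/-- The information functional `i(r) = (∫ s r p)² / ∫ r p`. -/
noncomputable def info (p s r : ℝ → ℝ) : ℝ :=
  (∫ x, s x * r x * p x) ^ 2 / ∫ x, r x * p x

/-- The symmetrized information `i^(s)(r) = (i(r) + i(T r)) / 2`. -/
noncomputable def infoSym (α : ℝ) (p s r : ℝ → ℝ) : ℝ :=
  (info p s r + info p s (T α r)) / 2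

lemma key1 (α : ℝ) (p s : ℝ → ℝ)
    (hp0 : ∀ x, 0 ≤ p x) (hp1 : ∫ x, p x = 1)
    (hpint : Integrable p) (hspint : Integrable (fun x => s x * p x))
    (hs0 : ∫ x, s x * p x = 0)
    (r : ℝ → ℝ) (hr : ∀ x, 1 ≤ r x ∧ r x ≤ Real.exp α) :
    infoSym α p s r = ((Real.exp α + 1) / 2) *
      ((∫ x, s x * r x * p x) ^ 2 /
        ((∫ x, r x * p x) * (Real.exp α + 1 - ∫ x, r x * p x))) := by
  set C := Real.exp α + 1 with hC
  by_cases hI : Integrable (fun x => r x * p x)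
  · have heqT : (fun x => T α r x * p x) = fun x => C * p x - r x * p x := by
      funext x; simp [T]; ring
    have hTint : Integrable (fun x => T α r x * p x) := by
      rw [heqT]; exact (hpint.const_mul C).sub hI
    have hB' : ∫ x, T α r x * p x = C - ∫ x, r x * p x := by
      rw [heqT, integral_sub (hpint.const_mul C) hI, integral_const_mul, hp1]; ring
    have hB1 : 1 ≤ ∫ x, r x * p x := by
      rw [← hp1]
      refine integral_mono hpint hI fun x => ?_
      nlinarith [(hr x).1, hp0 x]
    have hBle : ∫ x, r x * p x ≤ Real.exp α := by
      calc ∫ x, r x * p x ≤ ∫ x, Real.exp α * p x := by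
            refine integral_mono hI (hpint.const_mul _) fun x => ?_
            nlinarith [(hr x).2, hp0 x]
        _ = Real.exp α := by rw [integral_const_mul, hp1, mul_one]
    by_cases hJ : Integrable (fun x => s x * r x * p x)
    · have heqTs : (fun x => s x * T α r x * p x) = fun x => C * (s x * p x) - s x * r x * p x := by
        funext x; simp [T]; ring
      have hA' : ∫ x, s x * T α r x * p x = -∫ x, s x * r x * p x := by
        rw [heqTs, integral_sub (hspint.const_mul C) hJ, integral_const_mul, hs0]; ring
      simp only [infoSym, info, hA', hB']
      have h1 : (∫ x, r x * p x) ≠ 0 := by linarith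
      have h2 : C - ∫ x, r x * p x ≠ 0 := by rw [hC]; intro h; nlinarith
      field_simp
      ring
    · have hA : ∫ x, s x * r x * p x = 0 := integral_undef hJ
      have hJT : ¬ Integrable (fun x => s x * T α r x * p x) := by
        intro h
        have heqTs : (fun x => s x * T α r x * p x) =
            fun x => C * (s x * p x) - s x * r x * p x := by
          funext x; simp [T]; ring
        apply hJ
        have : (fun x => s x * r x * p x) =
            fun x => C * (s x * p x) - s x * T α r x * p x := by
          funext x; simp [T]; ring
        rw [this]; exact (hspint.const_mul C).sub h
      have hA' : ∫ x, s x * T α r x * p x = 0 := integral_undef hJT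
      simp [infoSym, info, hA, hA']
  · have hB : ∫ x, r x * p x = 0 := integral_undef hI
    have hIT : ¬ Integrable (fun x => T α r x * p x) := by
      intro h
      apply hI
      have : (fun x => r x * p x) = fun x => C * p x - T α r x * p x := by
        funext x; simp [T]; ring
      rw [this]; exact (hpint.const_mul C).sub h
    have hB' : ∫ x, T α r x * p x = 0 := integral_undef hIT
    simp [infoSym, info, hB, hB']

lemma key2 (α : ℝ) (p s : ℝ → ℝ)
    (hp0 : ∀ x, 0 ≤ p x) (hp1 : ∫ x, p x = 1)
    (hpint : Integrable p) (hsabs : Integrable (fun x => |s x| * p x))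
    (r : ℝ → ℝ) (hr : ∀ x, 1 ≤ r x ∧ r x ≤ Real.exp α) :
    ‖info p s r‖ ≤ (Real.exp α * ∫ x, |s x| * p x) ^ 2 := by
  have hM0 : 0 ≤ ∫ x, |s x| * p x := integral_nonneg fun x => mul_nonneg (abs_nonneg _) (hp0 x)
  by_cases hI : Integrable (fun x => r x * p x)
  · by_cases hJ : Integrable (fun x => s x * r x * p x)
    · have hB1 : 1 ≤ ∫ x, r x * p x := by
        rw [← hp1]
        refine integral_mono hpint hI fun x => ?_
        nlinarith [(hr x).1, hp0 x]
      have hA : |∫ x, s x * r x * p x| ≤ Real.exp α * ∫ x, |s x| * p x := by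
        calc |∫ x, s x * r x * p x| ≤ ∫ x, |s x * r x * p x| := by
              simpa only [Real.norm_eq_abs] using
                norm_integral_le_integral_norm (fun x => s x * r x * p x)
          _ ≤ ∫ x, Real.exp α * (|s x| * p x) := by
              refine integral_mono hJ.abs (hsabs.const_mul _) fun x => ?_
              have h1 := (hr x).1; have h2 := (hr x).2; have h3 := hp0 x
              rw [abs_mul, abs_mul, abs_of_nonneg h3,
                abs_of_nonneg (by linarith : (0:ℝ) ≤ r x)]
              nlinarith [abs_nonneg (s x), mul_nonneg (abs_nonneg (s x)) h3]
          _ = Real.exp α * ∫ x, |s x| * p x := integral_const_mul _ _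
      have hBpos : (0:ℝ) < ∫ x, r x * p x := by linarith
      rw [info, Real.norm_eq_abs, abs_div, abs_of_nonneg (sq_nonneg _),
        abs_of_pos hBpos]
      calc (∫ x, s x * r x * p x) ^ 2 / (∫ x, r x * p x)
          ≤ (∫ x, s x * r x * p x) ^ 2 / 1 := by
            apply div_le_div_of_nonneg_left (sq_nonneg _) one_pos hB1 |>.trans_eq rfl
        _ = (∫ x, s x * r x * p x) ^ 2 := div_one _
        _ ≤ (Real.exp α * ∫ x, |s x| * p x) ^ 2 := by
            rw [← sq_abs (∫ x, s x * r x * p x)]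
            exact pow_le_pow_left₀ (abs_nonneg _) hA 2
    · simp [info, integral_undef hJ]
      positivity
  · simp [info, integral_undef hI]
    positivity

theorem fisher_info_of_symmetric_measure
    (α : ℝ) (hα : 0 < α) (p s : ℝ → ℝ)
    (hp : Measurable p) (hs : Measurable s) (hp0 : ∀ x, 0 ≤ p x)
    (hp1 : ∫ x, p x = 1)
    (hsp : Integrable (fun x => |s x| * p x))
    (hs0 : ∫ x, s x * p x = 0)
    (μ : Measure (ℝ → ℝ)) [IsFiniteMeasure μ]
    (hsym : μ.map (T α) = μ)
    (hbd : ∀ᵐ r ∂μ, ∀ x : ℝ, 1 ≤ r x ∧ r x ≤ Real.exp α)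
    (hm1 : AEStronglyMeasurable (fun r : ℝ → ℝ => ∫ x, s x * r x * p x) μ)
    (hm2 : AEStronglyMeasurable (fun r : ℝ → ℝ => ∫ x, r x * p x) μ) :
    (∫ r, info p s r ∂μ = ∫ r, infoSym α p s r ∂μ) ∧
    (∫ r, info p s r ∂μ =
      ((Real.exp α + 1) / 2) *
        ∫ r, (∫ x, s x * r x * p x) ^ 2 /
          ((∫ x, r x * p x) * (Real.exp α + 1 - ∫ x, r x * p x)) ∂μ) := by
  -- basic integrability facts about p, s
  have hpint : Integrable p := by
    by_contra h
    rw [integral_undef h] at hp1; norm_num at hp1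
  have hspint : Integrable (fun x => s x * p x) := by
    refine hsp.mono' ((hs.mul hp).aestronglyMeasurable) ?_
    filter_upwards with x
    rw [Real.norm_eq_abs, abs_mul, abs_of_nonneg (hp0 x)]
  -- T preserves the bounds
  have hbdT : ∀ᵐ r ∂μ, ∀ x : ℝ, 1 ≤ T α r x ∧ T α r x ≤ Real.exp α := by
    filter_upwards [hbd] with r hr x
    constructor
    · simp only [T]; linarith [(hr x).2]
    · simp only [T]; linarith [(hr x).1]
  -- measurability
  have hT : Measurable (T α) :=
    measurable_pi_lambda _ fun x => measurable_const.sub (measurable_pi_apply x)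
  have hinfom : AEStronglyMeasurable (fun r => info p s r) μ := by
    unfold info
    exact ((hm1.aemeasurable.pow_const 2).div hm2.aemeasurable).aestronglyMeasurable
  have hinfom' : AEStronglyMeasurable (info p s) (μ.map (T α)) := by
    rw [hsym]; exact hinfom
  have hinfomT : AEStronglyMeasurable (fun r => info p s (T α r)) μ :=
    hinfom'.comp_measurable hT
  -- invariance of the integral under T
  have hmap : ∫ r, info p s r ∂μ = ∫ r, info p s (T α r) ∂μ := by
    conv_lhs => rw [← hsym]
    exact integral_map hT.aemeasurable hinfom'
  -- integrability of info and info ∘ T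
  set M : ℝ := (Real.exp α * ∫ x, |s x| * p x) ^ 2 with hM
  have hint : Integrable (fun r => info p s r) μ := by
    refine (integrable_const M).mono' hinfom ?_
    filter_upwards [hbd] with r hr
    exact key2 α p s hp0 hp1 hpint hsp r hr
  have hintT : Integrable (fun r => info p s (T α r)) μ := by
    refine (integrable_const M).mono' hinfomT ?_
    filter_upwards [hbdT] with r hr
    exact key2 α p s hp0 hp1 hpint hsp (T α r) hr
  -- first claim
  have claim1 : ∫ r, info p s r ∂μ = ∫ r, infoSym α p s r ∂μ := by
    simp only [infoSym]
    rw [integral_div, integral_add hint hintT, ← hmap]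
    ring
  refine ⟨claim1, ?_⟩
  rw [claim1]
  have hcongr : ∫ r, infoSym α p s r ∂μ =
      ∫ r, ((Real.exp α + 1) / 2) *
        ((∫ x, s x * r x * p x) ^ 2 /
          ((∫ x, r x * p x) * (Real.exp α + 1 - ∫ x, r x * p x))) ∂μ := by
    refine integral_congr_ae ?_
    filter_upwards [hbd] with r hr
    exact key1 α p s hp0 hp1 hpint hspint hs0 r hr
  rw [hcongr, integral_const_mul]
end

section
/- Let μ̄ be a finite measure on Ω such that for μ̄-almost every r, r(x) ∈ {1, e^α} for all x; assume μ̄ is normalized (for Lebesgue-almost every x, ∫_Ω r(x) dμ̄(r) = 1), symmetric (T_*μ̄ = μ̄), and that the functionals r ↦ ∫_ℝ s(x) r(x) p(x) dx and r ↦ ∫_ℝ r(x) p(x) dx are μ̄-almost everywhere strongly measurable. Suppose μ̄ is a maximizer: for every finite measure μ' on Ω such that for μ'-almost every r, r(x) ∈ {1, e^α} for all x, μ' is normalized, and the two functionals above are μ'-almost everywhere strongly measurable, one has ∫_Ω i(r) dμ'(r) ≤ ∫_Ω i(r) dμ̄(r). Then there exists a constant κ ≥ 0 such that i^(s)(r)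 = κ for μ̄-almost every r, and ∫_Ω i(r) dμ̄(r) = 2κ/(e^α + 1). -/
open MeasureTheory
open scoped ENNReal

lemma T_T (α : ℝ) (r : ℝ → ℝ) : T α (T α r) = r := by
  funext x; simp [T]

lemma measurable_T (α : ℝ) : Measurable (T α) :=
  measurable_pi_lambda _ fun x => measurable_const.sub (measurable_pi_apply x)

lemma infoSym_T (α : ℝ) (p s r : ℝ → ℝ) :
    infoSym α p s (T α r) = infoSym α p s r := by
  simp [infoSym, T_T, add_comm]

lemma info_nonneg (p s r : ℝ → ℝ) (hp0 : ∀ x, 0 ≤ p x) (hr0 : ∀ x, 0 ≤ r x) :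
    0 ≤ info p s r := by
  have h : 0 ≤ ∫ x, r x * p x :=
    integral_nonneg fun x => mul_nonneg (hr0 x) (hp0 x)
  exact div_nonneg (sq_nonneg _) h

lemma info_le (p s r : ℝ → ℝ) (M : ℝ) (hp0 : ∀ x, 0 ≤ p x)
    (hpi : Integrable p) (hp1 : ∫ x, p x = 1)
    (hsp : Integrable (fun x => |s x| * p x))
    (hr1 : ∀ x, 1 ≤ r x) (hrM : ∀ x, r x ≤ M) :
    info p s r ≤ (M * ∫ x, |s x| * p x) ^ 2 := by
  have hSnn : 0 ≤ ∫ x, |s x| * p x :=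
    integral_nonneg fun x => mul_nonneg (abs_nonneg _) (hp0 x)
  have hM1 : (1 : ℝ) ≤ M := le_trans (hr1 0) (hrM 0)
  by_cases hB : Integrable (fun x => r x * p x)
  · have hBge : (1 : ℝ) ≤ ∫ x, r x * p x := by
      rw [← hp1]
      exact integral_mono hpi hB fun x => by nlinarith [hp0 x, hr1 x]
    by_cases hA : Integrable (fun x => s x * r x * p x)
    · have habs : |∫ x, s x * r x * p x| ≤ M * ∫ x, |s x| * p x := by
        calc |∫ x, s x * r x * p x| ≤ ∫ x, |s x * r x * p x| := by
              have := norm_integral_le_integral_norm (μ := volume)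
                (fun x => s x * r x * p x)
              simpa only [Real.norm_eq_abs] using this
          _ ≤ ∫ x, M * (|s x| * p x) := by
              refine integral_mono hA.abs (hsp.const_mul M) fun x => ?_
              have h1 : |s x * r x * p x| = |s x| * r x * p x := by
                rw [abs_mul, abs_mul, abs_of_nonneg (hp0 x),
                  abs_of_nonneg (le_trans zero_le_one (hr1 x))]
              rw [h1]
              nlinarith [mul_nonneg (sub_nonneg.mpr (hrM x))
                (mul_nonneg (abs_nonneg (s x)) (hp0 x)), abs_nonneg (s x), hp0 x, hr1 x]
          _ = M * ∫ x, |s x| * p x := integral_const_mul M _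
      have hsq : (∫ x, s x * r x * p x) ^ 2 ≤ (M * ∫ x, |s x| * p x) ^ 2 := by
        have := abs_nonneg (∫ x, s x * r x * p x)
        nlinarith [sq_abs (∫ x, s x * r x * p x)]
      calc info p s r ≤ (∫ x, s x * r x * p x) ^ 2 :=
            div_le_self (sq_nonneg _) hBge
        _ ≤ _ := hsq
    · unfold info
      rw [integral_undef hA]
      simpa using sq_nonneg (M * ∫ x, |s x| * p x)
  · unfold info
    rw [integral_undef hB]
    simpa using sq_nonneg (M * ∫ x, |s x| * p x)

set_option maxHeartbeats 1600000 in
theorem infoSym_ae_constant_of_maximizer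
    (α : ℝ) (hα : 0 < α) (p s : ℝ → ℝ)
    (hp : Measurable p) (hs : Measurable s) (hp0 : ∀ x, 0 ≤ p x)
    (hp1 : ∫ x, p x = 1)
    (hsp : Integrable (fun x => |s x| * p x))
    (hs0 : ∫ x, s x * p x = 0)
    (μbar : Measure (ℝ → ℝ)) [IsFiniteMeasure μbar]
    (hext : ∀ᵐ r ∂μbar, ∀ x : ℝ, r x = 1 ∨ r x = Real.exp α)
    (hnorm : ∀ᵐ x ∂(volume : Measure ℝ), ∫ r, r x ∂μbar = 1)
    (hsym : μbar.map (T α) = μbar)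
    (hm1 : AEStronglyMeasurable (fun r : ℝ → ℝ => ∫ x, s x * r x * p x) μbar)
    (hm2 : AEStronglyMeasurable (fun r : ℝ → ℝ => ∫ x, r x * p x) μbar)
    (hmax : ∀ (μ' : Measure (ℝ → ℝ)), IsFiniteMeasure μ' →
      (∀ᵐ r ∂μ', ∀ x : ℝ, r x = 1 ∨ r x = Real.exp α) →
      (∀ᵐ x ∂(volume : Measure ℝ), ∫ r, r x ∂μ' = 1) →
      AEStronglyMeasurable (fun r : ℝ → ℝ => ∫ x, s x * r x * p x) μ' →
      AEStronglyMeasurable (fun r : ℝ → ℝ => ∫ x, r x * p x) μ' →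
      ∫ r, info p s r ∂μ' ≤ ∫ r, info p s r ∂μbar) :
    ∃ κ : ℝ, 0 ≤ κ ∧ (∀ᵐ r ∂μbar, infoSym α p s r = κ) ∧
      ∫ r, info p s r ∂μbar = 2 * κ / (Real.exp α + 1) := by
  classical
  set E := Real.exp α with hE_def
  have hE1 : 1 ≤ E := Real.one_le_exp hα.le
  have hEpos : 0 < E + 1 := by linarith
  have hpint : Integrable p := by
    by_contra h
    rw [integral_undef h] at hp1
    norm_num at hp1
  set S := ∫ x, |s x| * p x with hS_def
  set C := (E * S) ^ 2 with hC_def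
  set f := infoSym α p s with hf_def
  set m := (μbar Set.univ).toReal with hm_def
  have hTm := measurable_T α
  -- a.e. bounds on r
  have hb : ∀ r : ℝ → ℝ, (∀ x, r x = 1 ∨ r x = E) →
      (∀ x, 1 ≤ r x ∧ r x ≤ E) ∧ (∀ x, 1 ≤ T α r x ∧ T α r x ≤ E) := by
    intro r h
    constructor
    · intro x
      rcases h x with h1 | h1 <;> rw [h1] <;> exact ⟨by linarith, by linarith⟩
    · intro x
      rcases h x with h1 | h1 <;> simp only [T, h1] <;>
        exact ⟨by linarith, by linarith⟩
  -- ae transfer through T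
  have hae_comp : ∀ {P : (ℝ → ℝ) → Prop}, (∀ᵐ r ∂μbar, P r) →
      ∀ᵐ r ∂μbar, P (T α r) := by
    intro P h
    rw [ae_iff] at h ⊢
    obtain ⟨N, hsub, hNm, hN0⟩ := exists_measurable_superset_of_null h
    have hmap : μbar (T α ⁻¹' N) = 0 := by
      have := Measure.map_apply hTm hNm (μ := μbar)
      rw [hsym] at this
      rw [← this, hN0]
    exact measure_mono_null (fun r hr => @hsub (T α r) hr) hmap
  -- integrability of evaluations
  have heval_int : ∀ x : ℝ, Integrable (fun r : ℝ → ℝ => r x) μbar := by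
    intro x
    refine Integrable.mono' (integrable_const E)
      (measurable_pi_apply x).aestronglyMeasurable ?_
    filter_upwards [hext] with r hr
    rcases hr x with h | h <;> rw [Real.norm_eq_abs, h, abs_of_nonneg] <;> linarith
  -- key symmetrization identity for integrals
  have key : ∀ G : (ℝ → ℝ) → ℝ, AEStronglyMeasurable G μbar →
      ∫ r, G (T α r) ∂μbar = ∫ r, G r ∂μbar := by
    intro G hG
    conv_rhs => rw [← hsym]
    rw [integral_map hTm.aemeasurable (by rwa [hsym])]
  -- evaluation integral identity
  have heval : ∀ x : ℝ, 2 * ∫ r, r x ∂μbar = (E + 1) * m := by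
    intro x
    have h1 : ∫ r, (T α r) x ∂μbar = ∫ r, r x ∂μbar :=
      key _ (measurable_pi_apply x).aestronglyMeasurable
    have h2 : ∫ r, (T α r) x ∂μbar = (E + 1) * m - ∫ r, r x ∂μbar := by
      have : (fun r : ℝ → ℝ => (T α r) x) = fun r => (E + 1) - r x := by
        funext r; simp only [T]; rfl
      rw [this, integral_sub (integrable_const _) (heval_int x),
        integral_const, smul_eq_mul, show μbar.real Set.univ = m from rfl]
      ring
    linarith [h1, h2]
  -- mass of μbar
  have hvol_ne : (volume : Measure ℝ) ≠ 0 := by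
    intro h
    have := congrArg (fun μ : Measure ℝ => μ (Set.Icc (0:ℝ) 1)) h
    simp [Real.volume_Icc] at this
  haveI : (ae (volume : Measure ℝ)).NeBot := ae_neBot.mpr hvol_ne
  obtain ⟨x0, hx0⟩ := hnorm.exists
  have hmass : (E + 1) * m = 2 := by
    have := heval x0
    rw [hx0] at this
    linarith
  have hm_pos : 0 < m := by nlinarith
  -- measurability of info and f
  have hinfo_asm : AEStronglyMeasurable (info p s) μbar := by
    have h : info p s = fun r => ((∫ x, s x * r x * p x) * (∫ x, s x * r x * p x))
        / ∫ x, r x * p x := by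
      funext r; rw [info, sq]
    rw [h]
    exact ((hm1.aemeasurable.mul hm1.aemeasurable).div
      hm2.aemeasurable).aestronglyMeasurable
  have hinfoT_asm : AEStronglyMeasurable (fun r => info p s (T α r)) μbar := by
    have h : AEStronglyMeasurable (info p s) (μbar.map (T α)) := by rwa [hsym]
    exact h.comp_aemeasurable hTm.aemeasurable
  have hf_asm : AEStronglyMeasurable f μbar := by
    have h : f = fun r => (info p s r + info p s (T α r)) * 2⁻¹ := by
      funext r
      show infoSym α p s r = _
      rw [infoSym, div_eq_mul_inv]
    rw [h]
    exact (hinfo_asm.add hinfoT_asm).mul aestronglyMeasurable_const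
  -- bounds
  have hSnn : 0 ≤ S := integral_nonneg fun x => mul_nonneg (abs_nonneg _) (hp0 x)
  have hC0 : 0 ≤ C := sq_nonneg _
  have hinfo_bd : ∀ r : ℝ → ℝ, (∀ x, r x = 1 ∨ r x = E) →
      0 ≤ info p s r ∧ info p s r ≤ C := by
    intro r hr
    obtain ⟨h1, _⟩ := hb r hr
    exact ⟨info_nonneg p s r hp0 fun x => le_trans zero_le_one (h1 x).1,
      info_le p s r E hp0 hpint hp1 hsp (fun x => (h1 x).1) fun x => (h1 x).2⟩
  have hinfoT_bd : ∀ r : ℝ → ℝ, (∀ x, r x = 1 ∨ r x = E) →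
      0 ≤ info p s (T α r) ∧ info p s (T α r) ≤ C := by
    intro r hr
    obtain ⟨_, h2⟩ := hb r hr
    exact ⟨info_nonneg p s _ hp0 fun x => le_trans zero_le_one (h2 x).1,
      info_le p s _ E hp0 hpint hp1 hsp (fun x => (h2 x).1) fun x => (h2 x).2⟩
  have hf_bd : ∀ᵐ r ∂μbar, 0 ≤ f r ∧ f r ≤ C := by
    filter_upwards [hext] with r hr
    obtain ⟨ha, hb1⟩ := hinfo_bd r hr
    obtain ⟨hc, hd⟩ := hinfoT_bd r hr
    constructor
    · have : f r = (info p s r + info p s (T α r)) / 2 := rfl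
      rw [this]; linarith
    · have : f r = (info p s r + info p s (T α r)) / 2 := rfl
      rw [this]; linarith
  have hf_int : Integrable f μbar := by
    refine Integrable.mono' (integrable_const C) hf_asm ?_
    filter_upwards [hf_bd] with r hr
    rw [Real.norm_eq_abs, abs_of_nonneg hr.1]; exact hr.2
  have hinfo_int : Integrable (info p s) μbar := by
    refine Integrable.mono' (integrable_const C) hinfo_asm ?_
    filter_upwards [hext] with r hr
    obtain ⟨h1, h2⟩ := hinfo_bd r hr
    rw [Real.norm_eq_abs, abs_of_nonneg h1]; exact h2
  have hinfoT_int : Integrable (fun r => info p s (T α r)) μbar := by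
    refine Integrable.mono' (integrable_const C) hinfoT_asm ?_
    filter_upwards [hext] with r hr
    obtain ⟨h1, h2⟩ := hinfoT_bd r hr
    rw [Real.norm_eq_abs, abs_of_nonneg h1]; exact h2
  -- ∫ info = ∫ f
  have hsym_info : ∫ r, info p s (T α r) ∂μbar = ∫ r, info p s r ∂μbar :=
    key _ hinfo_asm
  have hif : ∫ r, info p s r ∂μbar = ∫ r, f r ∂μbar := by
    have : ∫ r, f r ∂μbar
        = (∫ r, info p s r ∂μbar + ∫ r, info p s (T α r) ∂μbar) / 2 := by
      rw [← integral_add hinfo_int hinfoT_int]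
      simp only [hf_def, infoSym]
      rw [integral_div]
    rw [this, hsym_info]; ring
  -- define κ
  set κ := (∫ r, f r ∂μbar) / m with hκ_def
  have hfint_nn : 0 ≤ ∫ r, f r ∂μbar :=
    integral_nonneg_of_ae (hf_bd.mono fun r hr => hr.1)
  have hκ0 : 0 ≤ κ := div_nonneg hfint_nn hm_pos.le
  have hκm : ∫ r, f r ∂μbar = κ * m := by
    rw [hκ_def]; field_simp
  refine ⟨κ, hκ0, ?_, ?_⟩
  · -- main part: f = κ a.e.
    obtain ⟨g, hg_sm, hfg⟩ := hf_asm
    -- g ∘ T = g a.e.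
    have hfT : ∀ r, f (T α r) = f r := fun r => infoSym_T α p s r
    have hgT : ∀ᵐ r ∂μbar, g (T α r) = g r := by
      have h1 : ∀ᵐ r ∂μbar, f (T α r) = g (T α r) := hae_comp hfg
      filter_upwards [h1, hfg] with r h1 h2
      rw [← h1, hfT, h2]
    set A := {r : ℝ → ℝ | κ < g r} with hA_def
    have hA_meas : MeasurableSet A := measurableSet_lt measurable_const hg_sm.measurable
    have hA0 : μbar A = 0 := by
      by_contra hA0
      set a := (μbar A).toReal with ha_def
      have ha_pos : 0 < a :=
        ENNReal.toReal_pos hA0 (measure_ne_top _ _)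
      set c : ℝ≥0∞ := μbar Set.univ / μbar A with hc_def
      set μ' := c • μbar.restrict A with hμ'_def
      have hc_ne_top : c ≠ ⊤ :=
        (ENNReal.div_lt_top (measure_ne_top _ _) hA0).ne
      have hc_toReal : c.toReal = m / a := by
        rw [hc_def, ENNReal.toReal_div]
      haveI hμ'fin : IsFiniteMeasure μ' := by
        constructor
        rw [hμ'_def, Measure.smul_apply, Measure.restrict_apply_univ]
        exact ENNReal.mul_lt_top hc_ne_top.lt_top (measure_lt_top _ _)
      have hac : μ' ≪ μbar := by
        intro t ht
        rw [hμ'_def, Measure.smul_apply]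
        have : μbar.restrict A t = 0 :=
          le_antisymm (le_trans (Measure.restrict_le_self _) ht.le) (zero_le)
        rw [this, smul_zero]
      -- indicator swap
      have hindT : ∀ᵐ r ∂μbar,
          A.indicator (fun _ => (1:ℝ)) (T α r) = A.indicator (fun _ => (1:ℝ)) r := by
        filter_upwards [hgT] with r hr
        by_cases h : r ∈ A
        · rw [Set.indicator_of_mem h, Set.indicator_of_mem]
          simpa [hA_def, hr] using h
        · rw [Set.indicator_of_notMem h, Set.indicator_of_notMem]
          simpa [hA_def, hr] using h
      have hind_asm : AEStronglyMeasurable (A.indicator (fun _ => (1:ℝ))) μbar :=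
        ((measurable_const (a := (1:ℝ))).indicator hA_meas).aestronglyMeasurable
      have hind_int : ∫ r, A.indicator (fun _ => (1:ℝ)) r ∂μbar = a := by
        rw [integral_indicator_const _ hA_meas]; simp [ha_def]; rfl
      -- restricted symmetrization: for H with bounds
      have hres : ∀ H : (ℝ → ℝ) → ℝ, AEStronglyMeasurable H μbar →
          (∃ D : ℝ, ∀ᵐ r ∂μbar, ‖H r‖ ≤ D) →
          ∫ r, A.indicator (fun _ => (1:ℝ)) r * H (T α r) ∂μbar
            = ∫ r, A.indicator (fun _ => (1:ℝ)) r * H r ∂μbar := by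
        intro H hH hD
        have hHT : AEStronglyMeasurable (fun r => H (T α r)) μbar := by
          have h : AEStronglyMeasurable H (μbar.map (T α)) := by rwa [hsym]
          exact h.comp_aemeasurable hTm.aemeasurable
        have step : ∫ r, A.indicator (fun _ => (1:ℝ)) (T α r) * H (T α r) ∂μbar
            = ∫ r, A.indicator (fun _ => (1:ℝ)) r * H r ∂μbar :=
          key _ (hind_asm.mul hH)
        rw [← step]
        refine integral_congr_ae ?_
        filter_upwards [hindT] with r hr
        rw [hr]
      -- normalization of μ'
      have hnorm' : ∀ x : ℝ, ∫ r, r x ∂μ' = 1 := by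
        intro x
        have hswap : ∫ r, A.indicator (fun _ => (1:ℝ)) r * (T α r) x ∂μbar
            = ∫ r, A.indicator (fun _ => (1:ℝ)) r * r x ∂μbar := by
          refine hres (fun r => r x) (measurable_pi_apply x).aestronglyMeasurable ⟨E, ?_⟩
          filter_upwards [hext] with r hr
          rcases hr x with h | h <;> rw [Real.norm_eq_abs, h, abs_of_nonneg] <;> linarith
        have hint1 : Integrable (fun r => A.indicator (fun _ => (1:ℝ)) r * r x) μbar := by
          refine Integrable.mono' (integrable_const E)
            (hind_asm.mul (measurable_pi_apply x).aestronglyMeasurable) ?_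
          filter_upwards [hext] with r hr
          have h1 : 0 < r x ∧ r x ≤ E := by
            rcases hr x with h | h <;> rw [h] <;> exact ⟨by linarith, by linarith⟩
          rw [Real.norm_eq_abs, abs_mul]
          by_cases hmem : r ∈ A
          · rw [Set.indicator_of_mem hmem, abs_one, one_mul, abs_of_pos h1.1]
            exact h1.2
          · rw [Set.indicator_of_notMem hmem, abs_zero, zero_mul]
            linarith
        have hexp : (fun r : ℝ → ℝ => A.indicator (fun _ => (1:ℝ)) r * (T α r) x)
            = fun r => (E + 1) * A.indicator (fun _ => (1:ℝ)) r
              - A.indicator (fun _ => (1:ℝ)) r * r x := by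
          funext r; simp only [T]; ring
        have hval : ∫ r, A.indicator (fun _ => (1:ℝ)) r * r x ∂μbar = (E + 1) * a / 2 := by
          have := hswap
          have hind_integrable : Integrable (A.indicator (fun _ => (1:ℝ))) μbar :=
            (integrable_const (1:ℝ)).indicator hA_meas
          rw [hexp, integral_sub (hind_integrable.const_mul (E+1)) hint1] at this
          rw [integral_const_mul, hind_int] at this
          linarith
        rw [hμ'_def]
        rw [integral_smul_measure]
        have hrest : ∫ r, r x ∂(μbar.restrict A) = (E + 1) * a / 2 := by
          rw [← hval, ← integral_indicator hA_meas]
          refine integral_congr_ae (Filter.Eventually.of_forall fun r => ?_)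
          by_cases hm : r ∈ A <;>
            simp [Set.indicator_of_mem, Set.indicator_of_notMem, hm]
        rw [hrest, hc_toReal, smul_eq_mul]
        field_simp
        nlinarith [hmass]
      -- hypotheses of hmax for μ'
      have hext' : ∀ᵐ r ∂μ', ∀ x : ℝ, r x = 1 ∨ r x = E := hac.ae_le hext
      have hm1' : AEStronglyMeasurable (fun r : ℝ → ℝ => ∫ x, s x * r x * p x) μ' :=
        hm1.mono_ac hac
      have hm2' : AEStronglyMeasurable (fun r : ℝ → ℝ => ∫ x, r x * p x) μ' :=
        hm2.mono_ac hac
      have hle := hmax μ' hμ'fin hext'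
        (Filter.Eventually.of_forall hnorm') hm1' hm2'
      -- compute ∫ info dμ'
      have hswapinfo : ∫ r, A.indicator (fun _ => (1:ℝ)) r * info p s (T α r) ∂μbar
          = ∫ r, A.indicator (fun _ => (1:ℝ)) r * info p s r ∂μbar := by
        refine hres (info p s) hinfo_asm ⟨C, ?_⟩
        filter_upwards [hext] with r hr
        obtain ⟨h1, h2⟩ := hinfo_bd r hr
        rw [Real.norm_eq_abs, abs_of_nonneg h1]; exact h2
      have ind_bd_int : ∀ H : (ℝ → ℝ) → ℝ, AEStronglyMeasurable H μbar →
          (∀ᵐ r ∂μbar, ‖H r‖ ≤ C) →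
          Integrable (fun r => A.indicator (fun _ => (1:ℝ)) r * H r) μbar := by
        intro H hH hbd
        refine Integrable.mono' (integrable_const C) (hind_asm.mul hH) ?_
        filter_upwards [hbd] with r hr
        rw [Real.norm_eq_abs, abs_mul]
        by_cases hm : r ∈ A <;>
          simp [Set.indicator_of_mem, Set.indicator_of_notMem, hm, ← Real.norm_eq_abs] <;>
          first
            | exact hr
            | exact hC0
      have hbd_info : ∀ᵐ r ∂μbar, ‖info p s r‖ ≤ C := by
        filter_upwards [hext] with r hr
        obtain ⟨h1, h2⟩ := hinfo_bd r hr
        rw [Real.norm_eq_abs, abs_of_nonneg h1]; exact h2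
      have hbd_infoT : ∀ᵐ r ∂μbar, ‖info p s (T α r)‖ ≤ C := by
        filter_upwards [hext] with r hr
        obtain ⟨h1, h2⟩ := hinfoT_bd r hr
        rw [Real.norm_eq_abs, abs_of_nonneg h1]; exact h2
      have hintf : ∫ r, A.indicator (fun _ => (1:ℝ)) r * info p s r ∂μbar
          = ∫ r, A.indicator (fun _ => (1:ℝ)) r * f r ∂μbar := by
        have h1 : (fun r => A.indicator (fun _ => (1:ℝ)) r * f r)
            = fun r => (A.indicator (fun _ => (1:ℝ)) r * info p s r
              + A.indicator (fun _ => (1:ℝ)) r * info p s (T α r)) / 2 := by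
          funext r
          simp only [hf_def, infoSym]
          ring
        rw [h1]
        rw [integral_div, integral_add (ind_bd_int _ hinfo_asm hbd_info)
          (ind_bd_int _ hinfoT_asm hbd_infoT), hswapinfo]
        ring
      -- ∫ info dμ' in terms of ∫_A f
      have hμ'info : ∫ r, info p s r ∂μ'
          = (m / a) * ∫ r, A.indicator (fun _ => (1:ℝ)) r * f r ∂μbar := by
        rw [hμ'_def, integral_smul_measure, hc_toReal, smul_eq_mul, ← hintf]
        congr 1
        rw [← integral_indicator hA_meas]
        refine integral_congr_ae (Filter.Eventually.of_forall fun r => ?_)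
        by_cases hm : r ∈ A <;>
          simp [Set.indicator_of_mem, Set.indicator_of_notMem, hm]
      -- strict inequality: ∫_A f > κ a
      have hAf_g : ∫ r, A.indicator (fun _ => (1:ℝ)) r * f r ∂μbar
          = ∫ r in A, g r ∂μbar := by
        rw [← integral_indicator hA_meas]
        refine integral_congr_ae ?_
        filter_upwards [hfg] with r hr
        by_cases hm : r ∈ A <;>
          simp [Set.indicator_of_mem, Set.indicator_of_notMem, hm, hr]
      have hg_intA : IntegrableOn g A μbar :=
        ((hf_int.congr hfg)).integrableOn
      have hstrict : κ * a < ∫ r in A, g r ∂μbar := by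
        by_contra hcon
        push_neg at hcon
        have h1 : ∀ᵐ r ∂(μbar.restrict A), κ < g r :=
          (ae_restrict_mem hA_meas).mono fun r hr => hr
        have hsub_int : ∫ r in A, (g r - κ) ∂μbar = ∫ r in A, g r ∂μbar - κ * a := by
          rw [integral_sub hg_intA (integrable_const _), integral_const,
            measureReal_restrict_apply_univ]
          simp [ha_def, smul_eq_mul, mul_comm]; exact Or.inl rfl
        have hnn : 0 ≤ᵐ[μbar.restrict A] fun r => g r - κ := by
          filter_upwards [h1] with r hr
          simp only [Pi.zero_apply]
          linarith
        have hz : ∫ r in A, (g r - κ) ∂μbar = 0 := by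
          have hge : 0 ≤ ∫ r in A, (g r - κ) ∂μbar := integral_nonneg_of_ae hnn
          have hle2 : ∫ r in A, (g r - κ) ∂μbar ≤ 0 := by rw [hsub_int]; linarith
          linarith
        have heq0 := (integral_eq_zero_iff_of_nonneg_ae hnn
          (hg_intA.sub (integrable_const _))).mp hz
        have hres_ne : μbar.restrict A ≠ 0 := fun h =>
          hA0 (Measure.restrict_eq_zero.mp h)
        haveI : (ae (μbar.restrict A)).NeBot := ae_neBot.mpr hres_ne
        obtain ⟨r, hr1, hr2⟩ := (h1.and heq0).exists
        have hr2' : g r - κ = 0 := hr2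
        linarith
      -- derive contradiction
      have hRHS : ∫ r, info p s r ∂μbar = κ * m := by rw [hif, hκm]
      have hLHS : ∫ r, info p s r ∂μ' = (m / a) * ∫ r in A, g r ∂μbar := by
        rw [hμ'info, hAf_g]
      rw [hLHS, hRHS] at hle
      have hma : 0 < m / a := div_pos hm_pos ha_pos
      have h4 : m / a * (κ * a) < m / a * ∫ r in A, g r ∂μbar :=
        mul_lt_mul_of_pos_left hstrict hma
      have h5 : m / a * (κ * a) = κ * m := by
        field_simp
      linarith
    -- so g ≤ κ a.e.
    have hg_le : ∀ᵐ r ∂μbar, g r ≤ κ := by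
      rw [ae_iff]
      convert hA0 using 2
      ext r
      simp [hA_def]
    -- mean value forces equality
    have hgκ : ∀ᵐ r ∂μbar, g r = κ := by
      have hint_g : Integrable g μbar := hf_int.congr hfg
      have h0 : ∫ r, (κ - g r) ∂μbar = 0 := by
        rw [integral_sub (integrable_const _) hint_g, integral_const]
        have : ∫ r, g r ∂μbar = ∫ r, f r ∂μbar := integral_congr_ae hfg.symm
        rw [this, hκm, smul_eq_mul, show μbar.real Set.univ = m from rfl]
        ring
      have hnn : 0 ≤ᵐ[μbar] fun r => κ - g r := by
        filter_upwards [hg_le] with r hr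
        simp only [Pi.zero_apply]
        linarith
      have := (integral_eq_zero_iff_of_nonneg_ae hnn
        ((integrable_const _).sub hint_g)).mp h0
      filter_upwards [this] with r hr
      have : κ - g r = 0 := hr
      linarith
    filter_upwards [hfg, hgκ] with r h1 h2
    exact h1.trans h2
  · rw [hif, hκm]
    rw [eq_div_iff hEpos.ne']
    linear_combination κ * hmass
end

section
/- For every measurable set F ⊆ ℝ, the information integrand decomposes into its symmetric and asymmetric components: i(r_F) = i^(s)(r_F) − (2(e^α − 1)/(e^α + 1)) · i^(as)(F). In particular, integrating against any finite measure ρ on the collection of measurable sets F (with F ↦ q_F and F ↦ B_F measurable), the Fisher information ∫ i(r_F) dρ(F) equals ∫ i^(s)(r_F) dρ(F) − (2(e^α − 1)/(e^α + 1)) ∫ i^(as)(F) dρ(F). -/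
open MeasureTheory

/-- The staircase function `r_F = 1 + (e^α - 1)·1_F`. -/
noncomputable def rF (α : ℝ) (F : Set ℝ) : ℝ → ℝ :=
  fun x => 1 + (Real.exp α - 1) * Set.indicator F (fun _ => (1 : ℝ)) x

/-- `q_F = ∫_F p`. -/
noncomputable def qF (p : ℝ → ℝ) (F : Set ℝ) : ℝ := ∫ x in F, p x

/-- `B_F = ∫_F s p`. -/
noncomputable def BF (p s : ℝ → ℝ) (F : Set ℝ) : ℝ := ∫ x in F, s x * p x

/-- The asymmetric component `i^(as)(F) = i^(s)(r_F)·(q_F - 1/2)`. -/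
noncomputable def infoAs (α : ℝ) (p s : ℝ → ℝ) (F : Set ℝ) : ℝ :=
  infoSym α p s (rF α F) * (qF p F - 1 / 2)

lemma integral_one_add_indicator_mul (c : ℝ) (g : ℝ → ℝ) (hg : Integrable g)
    {F : Set ℝ} (hF : MeasurableSet F) :
    ∫ x, (1 + c * F.indicator (fun _ => (1:ℝ)) x) * g x
      = (∫ x, g x) + c * ∫ x in F, g x := by
  have h : (fun x => (1 + c * F.indicator (fun _ => (1:ℝ)) x) * g x)
      = fun x => g x + c * F.indicator g x := by
    funext x; by_cases h : x ∈ F <;> simp [h] <;> ring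
  rw [h, integral_add hg ((hg.indicator hF).const_mul c), integral_const_mul,
    integral_indicator hF]

lemma T_rF (α : ℝ) (F : Set ℝ) : T α (rF α F) = rF α Fᶜ := by
  funext x
  by_cases h : x ∈ F <;> simp [T, rF, h] <;> ring

lemma info_rF_eq (α : ℝ) (p s : ℝ → ℝ) (hpInt : Integrable p)
    (hp1 : ∫ x, p x = 1)
    (hspInt : Integrable fun x => s x * p x) (hs0 : ∫ x, s x * p x = 0)
    {F : Set ℝ} (hF : MeasurableSet F) :
    info p s (rF α F)
      = ((Real.exp α - 1) * BF p s F) ^ 2 / (1 + (Real.exp α - 1) * qF p F) := by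
  unfold info rF BF qF
  have h1 : (fun x => s x * (1 + (Real.exp α - 1) * F.indicator (fun _ => (1:ℝ)) x) * p x)
      = fun x => (1 + (Real.exp α - 1) * F.indicator (fun _ => (1:ℝ)) x) * (s x * p x) := by
    funext x; ring
  have h2 : (fun x => (1 + (Real.exp α - 1) * F.indicator (fun _ => (1:ℝ)) x) * p x)
      = fun x => (1 + (Real.exp α - 1) * F.indicator (fun _ => (1:ℝ)) x) * (p x) := rfl
  rw [h1, integral_one_add_indicator_mul _ _ hspInt hF, hs0, zero_add,
    h2, integral_one_add_indicator_mul _ _ hpInt hF, hp1]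

theorem info_decomposition_sym_asym
    (α : ℝ) (hα : 0 < α) (p s : ℝ → ℝ)
    (hp : Measurable p) (hs : Measurable s) (hp0 : ∀ x, 0 ≤ p x)
    (hp1 : ∫ x, p x = 1)
    (hsp : Integrable (fun x => |s x| * p x))
    (hs0 : ∫ x, s x * p x = 0) :
    (∀ F : Set ℝ, MeasurableSet F →
      info p s (rF α F) =
        infoSym α p s (rF α F)
          - (2 * (Real.exp α - 1) / (Real.exp α + 1)) * infoAs α p s F) ∧
    (∀ (ι : Type) [MeasurableSpace ι] (ρ : Measure ι), IsFiniteMeasure ρ →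
      ∀ (Fam : ι → Set ℝ), (∀ t, MeasurableSet (Fam t)) →
        Measurable (fun t => qF p (Fam t)) →
        Measurable (fun t => BF p s (Fam t)) →
        ∫ t, info p s (rF α (Fam t)) ∂ρ =
          (∫ t, infoSym α p s (rF α (Fam t)) ∂ρ)
            - (2 * (Real.exp α - 1) / (Real.exp α + 1)) * ∫ t, infoAs α p s (Fam t) ∂ρ) := by
  have hexp : 1 < Real.exp α := by
    have := Real.add_one_lt_exp (ne_of_gt hα); linarith
  have hpInt : Integrable p := by
    by_contra h
    rw [integral_undef h] at hp1; norm_num at hp1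
  have hspInt : Integrable (fun x => s x * p x) := by
    refine hsp.mono' ((hs.mul hp).aestronglyMeasurable) (Filter.Eventually.of_forall fun x => ?_)
    rw [Real.norm_eq_abs, abs_mul, abs_of_nonneg (hp0 x)]
  set c : ℝ := Real.exp α - 1 with hc
  -- complement facts
  have hqcompl : ∀ F : Set ℝ, MeasurableSet F → qF p Fᶜ = 1 - qF p F := by
    intro F hF
    have := integral_add_compl hF hpInt
    unfold qF; rw [hp1] at this; linarith
  have hBcompl : ∀ F : Set ℝ, MeasurableSet F → BF p s Fᶜ = - BF p s F := by
    intro F hF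
    have := integral_add_compl hF hspInt
    unfold BF; rw [hs0] at this; linarith
  have hq0 : ∀ F : Set ℝ, MeasurableSet F → 0 ≤ qF p F := by
    intro F hF
    exact setIntegral_nonneg hF fun x _ => hp0 x
  have hq1 : ∀ F : Set ℝ, MeasurableSet F → qF p F ≤ 1 := by
    intro F hF
    have := hq0 Fᶜ hF.compl
    rw [hqcompl F hF] at this; linarith
  have hsymEq : ∀ F : Set ℝ, MeasurableSet F →
      infoSym α p s (rF α F)
        = ((c * BF p s F) ^ 2 / (1 + c * qF p F)
          + (c * BF p s F) ^ 2 / (Real.exp α - c * qF p F)) / 2 := by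
    intro F hF
    unfold infoSym
    rw [info_rF_eq α p s hpInt hp1 hspInt hs0 hF, T_rF,
      info_rF_eq α p s hpInt hp1 hspInt hs0 hF.compl, hqcompl F hF, hBcompl F hF]
    have : (c * -BF p s F) ^ 2 = (c * BF p s F) ^ 2 := by ring
    rw [this]
    congr 2
    ring
  have key : ∀ F : Set ℝ, MeasurableSet F →
      info p s (rF α F) =
        infoSym α p s (rF α F)
          - (2 * (Real.exp α - 1) / (Real.exp α + 1)) * infoAs α p s F := by
    intro F hF
    have hD1 : (0:ℝ) < 1 + c * qF p F := by
      have := hq0 F hF; nlinarith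
    have hD2 : (0:ℝ) < Real.exp α - c * qF p F := by
      have := hq1 F hF; nlinarith
    have hE : (0:ℝ) < Real.exp α + 1 := by linarith
    rw [infoAs, hsymEq F hF, info_rF_eq α p s hpInt hp1 hspInt hs0 hF, ← hc]
    field_simp
    ring
  refine ⟨key, ?_⟩
  intro ι _ ρ hρ Fam hFam hqm hBm
  set S : ℝ := ∫ x, |s x| * p x with hS
  have hS0 : 0 ≤ S := integral_nonneg fun x => mul_nonneg (abs_nonneg _) (hp0 x)
  have hBbd : ∀ t, |BF p s (Fam t)| ≤ S := by
    intro t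
    unfold BF
    calc |∫ x in Fam t, s x * p x| ≤ ∫ x in Fam t, |s x| * |p x| := by
          simpa [Real.norm_eq_abs] using
            norm_integral_le_integral_norm (μ := volume.restrict (Fam t)) (fun x => s x * p x)
      _ = ∫ x in Fam t, |s x| * p x := by
          congr 1; funext x; rw [abs_of_nonneg (hp0 x)]
      _ ≤ S := setIntegral_le_integral hsp
          (Filter.Eventually.of_forall fun x => mul_nonneg (abs_nonneg _) (hp0 x))
  set M : ℝ := (c * S) ^ 2 with hM
  have hsymBd : ∀ t, |infoSym α p s (rF α (Fam t))| ≤ M := by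
    intro t
    rw [hsymEq _ (hFam t)]
    have hq0' := hq0 _ (hFam t)
    have hq1' := hq1 _ (hFam t)
    have hD1 : (1:ℝ) ≤ 1 + c * qF p (Fam t) := by nlinarith
    have hD2 : (1:ℝ) ≤ Real.exp α - c * qF p (Fam t) := by nlinarith
    have hb2 : (c * BF p s (Fam t)) ^ 2 ≤ M := by
      rw [hM]
      have := hBbd t
      have habs : |c * BF p s (Fam t)| ≤ |c * S| := by
        rw [abs_mul, abs_mul]
        exact mul_le_mul_of_nonneg_left (by rwa [abs_of_nonneg hS0]) (abs_nonneg c)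
      calc (c * BF p s (Fam t)) ^ 2 = |c * BF p s (Fam t)| ^ 2 := (sq_abs _).symm
        _ ≤ |c * S| ^ 2 := by nlinarith [abs_nonneg (c * BF p s (Fam t))]
        _ = (c * S) ^ 2 := sq_abs _
    have h1 : (0:ℝ) ≤ (c * BF p s (Fam t)) ^ 2 / (1 + c * qF p (Fam t)) :=
      div_nonneg (sq_nonneg _) (by linarith)
    have h2 : (0:ℝ) ≤ (c * BF p s (Fam t)) ^ 2 / (Real.exp α - c * qF p (Fam t)) :=
      div_nonneg (sq_nonneg _) (by linarith)
    have h1' : (c * BF p s (Fam t)) ^ 2 / (1 + c * qF p (Fam t)) ≤ M :=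
      le_trans (div_le_self (sq_nonneg _) hD1) hb2
    have h2' : (c * BF p s (Fam t)) ^ 2 / (Real.exp α - c * qF p (Fam t)) ≤ M :=
      le_trans (div_le_self (sq_nonneg _) hD2) hb2
    rw [abs_of_nonneg (by positivity)]
    linarith
  have hsymMeas : Measurable (fun t => infoSym α p s (rF α (Fam t))) := by
    have : (fun t => infoSym α p s (rF α (Fam t)))
        = fun t => ((c * BF p s (Fam t)) ^ 2 / (1 + c * qF p (Fam t))
          + (c * BF p s (Fam t)) ^ 2 / (Real.exp α - c * qF p (Fam t))) / 2 := by
      funext t; exact hsymEq _ (hFam t)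
    rw [this]
    fun_prop
  have hAsMeas : Measurable (fun t => infoAs α p s (Fam t)) := by
    unfold infoAs
    exact (hsymMeas.mul (hqm.sub measurable_const))
  have hsymInt : Integrable (fun t => infoSym α p s (rF α (Fam t))) ρ := by
    refine Integrable.mono' (integrable_const M) hsymMeas.aestronglyMeasurable
      (Filter.Eventually.of_forall fun t => ?_)
    rw [Real.norm_eq_abs]; exact hsymBd t
  have hAsInt : Integrable (fun t => infoAs α p s (Fam t)) ρ := by
    refine Integrable.mono' (integrable_const M) hAsMeas.aestronglyMeasurable
      (Filter.Eventually.of_forall fun t => ?_)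
    rw [Real.norm_eq_abs]
    unfold infoAs
    rw [abs_mul]
    have hq0' := hq0 _ (hFam t)
    have hq1' := hq1 _ (hFam t)
    have hqb : |qF p (Fam t) - 1 / 2| ≤ 1 := by
      rw [abs_le]; constructor <;> linarith
    calc |infoSym α p s (rF α (Fam t))| * |qF p (Fam t) - 1 / 2|
        ≤ M * 1 := mul_le_mul (hsymBd t) hqb (abs_nonneg _)
          (le_trans (abs_nonneg _) (hsymBd t))
      _ = M := mul_one M
  have heq : (fun t => info p s (rF α (Fam t)))
      = fun t => infoSym α p s (rF α (Fam t))
          - (2 * (Real.exp α - 1) / (Real.exp α + 1)) * infoAs α p s (Fam t) := by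
    funext t; exact key _ (hFam t)
  rw [heq, integral_sub hsymInt (hAsInt.const_mul _), integral_const_mul, hc]
end

section
/- Let g : ℝ → ℝ ∪ {−∞, +∞} be nondecreasing and left-continuous, and d : ℝ → ℝ ∪ {−∞, +∞} be nondecreasing and right-continuous, with generalized inverses g⁻¹(x) := sup{y ∈ ℝ : g(y) ≤ x} and d⁻¹(x) := inf{y ∈ ℝ : d(y) ≥ x} in the extended reals. Then for all x, x₀ ∈ ℝ: (g(x₀) ≤ x and x ≤ d(x₀)) if and only if (d⁻¹(x) ≤ x₀ and x₀ ≤ g⁻¹(x)), all inequalities being taken in the extended reals. -/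
/-- The generalized inverse `g⁻¹(x) = sup {y ∈ ℝ : g(y) ≤ x}` in the extended reals
(`sup ∅ = ⊥ = -∞`). -/
noncomputable def ginv (g : ℝ → EReal) (x : ℝ) : EReal :=
  sSup (Real.toEReal '' {y : ℝ | g y ≤ (x : EReal)})

/-- The generalized inverse `d⁻¹(x) = inf {y ∈ ℝ : d(y) ≥ x}` in the extended reals
(`inf ∅ = ⊤ = +∞`). -/
noncomputable def dinv (d : ℝ → EReal) (x : ℝ) : EReal :=
  sInf (Real.toEReal '' {y : ℝ | (x : EReal) ≤ d y})

theorem generalized_inverse_interval_equiv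
    (g d : ℝ → EReal) (hg : Monotone g) (hd : Monotone d)
    (hgl : ∀ x : ℝ, ContinuousWithinAt g (Set.Iic x) x)
    (hdr : ∀ x : ℝ, ContinuousWithinAt d (Set.Ici x) x) :
    ∀ x x₀ : ℝ,
      (g x₀ ≤ (x : EReal) ∧ (x : EReal) ≤ d x₀) ↔
        (dinv d x ≤ (x₀ : EReal) ∧ (x₀ : EReal) ≤ ginv g x) := by
  intro x x₀
  constructor
  · rintro ⟨h1, h2⟩
    exact ⟨sInf_le ⟨x₀, h2, rfl⟩, le_sSup ⟨x₀, h1, rfl⟩⟩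
  · rintro ⟨h1, h2⟩
    constructor
    · -- g x₀ ≤ x
      have key : ∀ y ∈ Set.Iio x₀, g y ≤ (x : EReal) := by
        intro y hy
        have hlt : (y : EReal) < ginv g x :=
          lt_of_lt_of_le (by exact_mod_cast hy) h2
        rw [ginv, lt_sSup_iff] at hlt
        obtain ⟨b, ⟨z, hz, rfl⟩, hb⟩ := hlt
        exact le_trans (hg (by exact_mod_cast hb.le)) hz
      have ht : Filter.Tendsto g (nhdsWithin x₀ (Set.Iio x₀)) (nhds (g x₀)) :=
        (hgl x₀).mono_left (nhdsWithin_mono _ Set.Iio_subset_Iic_self)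
      exact le_of_tendsto ht (Filter.eventually_of_mem self_mem_nhdsWithin key)
    · -- x ≤ d x₀
      have key : ∀ y ∈ Set.Ioi x₀, (x : EReal) ≤ d y := by
        intro y hy
        have hlt : dinv d x < (y : EReal) :=
          lt_of_le_of_lt h1 (by exact_mod_cast hy)
        rw [dinv, sInf_lt_iff] at hlt
        obtain ⟨b, ⟨z, hz, rfl⟩, hb⟩ := hlt
        exact le_trans hz (hd (by exact_mod_cast hb.le))
      have ht : Filter.Tendsto d (nhdsWithin x₀ (Set.Ioi x₀)) (nhds (d x₀)) :=
        (hdr x₀).mono_left (nhdsWithin_mono _ Set.Ioi_subset_Ici_self)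
      exact ge_of_tendsto ht (Filter.eventually_of_mem self_mem_nhdsWithin key)
end

section
/- Let u₀ ∈ ℝ and let φ, ψ : ℝ → ℝ be measurable, Lebesgue integrable on a neighborhood of u₀, continuous at u₀, with ψ ≥ 0 and ψ(u₀) > 0. Then for all sequences (c_n) of positive reals with c_n → 0 and (α_n) of positive reals with c_n·e^{α_n} → ∞, one has ((e^{α_n} − 1)² / (1 + c_n(e^{α_n} − 1))) · (∫_{u₀ − c_n/2}^{u₀ + c_n/2} φ(w) dw)² / (1 + (e^{α_n} − 1) ∫_{u₀ − c_n/2}^{u₀ + c_n/2} ψ(w) dw) → φ(u₀)² / ψ(u₀) as n → ∞. -/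
open MeasureTheory Filter

lemma tendsto_avg_aux (u₀ : ℝ) (f : ℝ → ℝ)
    (hint : ∃ U ∈ nhds u₀, IntegrableOn f U) (hc : ContinuousAt f u₀)
    (c : ℕ → ℝ) (hcpos : ∀ n, 0 < c n) (hc0 : Tendsto c atTop (nhds 0)) :
    Tendsto (fun n => (∫ w in (u₀ - c n / 2)..(u₀ + c n / 2), f w) / c n)
      atTop (nhds (f u₀)) := by
  rw [Metric.tendsto_atTop]
  intro ε hε
  obtain ⟨U, hU, hUint⟩ := hint
  obtain ⟨r, hr, hrU⟩ := Metric.mem_nhds_iff.mp hU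
  obtain ⟨δ, hδ, hδf⟩ := Metric.continuousAt_iff.mp hc (ε/2) (half_pos hε)
  obtain ⟨N, hN⟩ := eventually_atTop.mp (hc0.eventually_lt_const (lt_min hδ hr))
  refine ⟨N, fun n hn => ?_⟩
  have hv := hcpos n
  have hvlt := hN n hn
  set v := c n with hvdef
  have hab : u₀ - v/2 ≤ u₀ + v/2 := by linarith
  have hsub : Set.Icc (u₀ - v/2) (u₀ + v/2) ⊆ Metric.ball u₀ (min δ r) := by
    intro x hx
    rw [Metric.mem_ball, Real.dist_eq]
    rw [Set.mem_Icc] at hx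
    have : |x - u₀| ≤ v/2 := abs_le.mpr ⟨by linarith, by linarith⟩
    linarith
  have hii : IntervalIntegrable f volume (u₀ - v/2) (u₀ + v/2) := by
    refine (hUint.mono_set ?_).intervalIntegrable
    rw [Set.uIcc_of_le hab]
    exact hsub.trans ((Metric.ball_subset_ball (min_le_right δ r)).trans hrU)
  have hbound : ‖∫ w in (u₀ - v/2)..(u₀ + v/2), (f w - f u₀)‖ ≤
      (ε/2) * |(u₀ + v/2) - (u₀ - v/2)| := by
    apply intervalIntegral.norm_integral_le_of_norm_le_const
    intro x hx
    rw [Set.uIoc_of_le hab] at hx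
    have hxb := hsub (Set.mem_Icc_of_Ioc hx)
    rw [Metric.mem_ball] at hxb
    have hxd : dist x u₀ < δ := lt_of_lt_of_le hxb (min_le_left _ _)
    exact le_of_lt (hδf hxd)
  have heq : (∫ w in (u₀ - v/2)..(u₀ + v/2), (f w - f u₀)) =
      (∫ w in (u₀ - v/2)..(u₀ + v/2), f w) - v * f u₀ := by
    rw [intervalIntegral.integral_sub hii (intervalIntegrable_const),
        intervalIntegral.integral_const, smul_eq_mul]
    ring_nf
  have habs : |(u₀ + v/2) - (u₀ - v/2)| = v := by
    rw [show (u₀ + v/2) - (u₀ - v/2) = v by ring, abs_of_pos hv]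
  rw [heq, Real.norm_eq_abs, habs] at hbound
  rw [Real.dist_eq]
  have h1 : (∫ w in (u₀ - v/2)..(u₀ + v/2), f w) / v - f u₀ =
      ((∫ w in (u₀ - v/2)..(u₀ + v/2), f w) - v * f u₀) / v := by
    field_simp
  rw [h1, abs_div, abs_of_pos hv]
  calc |(∫ w in (u₀ - v/2)..(u₀ + v/2), f w) - v * f u₀| / v
      ≤ (ε/2 * v) / v := by gcongr
    _ = ε/2 := by field_simp
    _ < ε := by linarith

theorem pointwise_limit_of_rescaled_information_integrand
    (u₀ : ℝ) (φ ψ : ℝ → ℝ) (hφm : Measurable φ) (hψm : Measurable ψ)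
    (hφint : ∃ U ∈ nhds u₀, IntegrableOn φ U)
    (hψint : ∃ U ∈ nhds u₀, IntegrableOn ψ U)
    (hφc : ContinuousAt φ u₀) (hψc : ContinuousAt ψ u₀)
    (hψ0 : ∀ x, 0 ≤ ψ x) (hψpos : 0 < ψ u₀)
    (c : ℕ → ℝ) (hcpos : ∀ n, 0 < c n) (hc0 : Tendsto c atTop (nhds 0))
    (a : ℕ → ℝ) (hapos : ∀ n, 0 < a n)
    (hca : Tendsto (fun n => c n * Real.exp (a n)) atTop atTop) :
    Tendsto (fun n =>
        ((Real.exp (a n) - 1) ^ 2 / (1 + c n * (Real.exp (a n) - 1))) *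
          (∫ w in (u₀ - c n / 2)..(u₀ + c n / 2), φ w) ^ 2 /
          (1 + (Real.exp (a n) - 1) * ∫ w in (u₀ - c n / 2)..(u₀ + c n / 2), ψ w))
      atTop (nhds (φ u₀ ^ 2 / ψ u₀)) := by
  set d : ℕ → ℝ := fun n => c n * (Real.exp (a n) - 1) with hddef
  have hE : ∀ n, 0 < Real.exp (a n) - 1 := fun n =>
    sub_pos.mpr (by rw [← Real.exp_zero]; exact Real.exp_lt_exp.mpr (hapos n))
  have hdpos : ∀ n, 0 < d n := fun n => mul_pos (hcpos n) (hE n)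
  have hd : Tendsto d atTop atTop := by
    have h1 : Tendsto (fun n => -(c n)) atTop (nhds 0) := by
      have := hc0.neg; rwa [neg_zero] at this
    have h2 := hca.atTop_add h1
    refine h2.congr fun n => ?_
    simp only [hddef]; ring
  have hinv : Tendsto (fun n => (d n)⁻¹) atTop (nhds 0) := hd.inv_tendsto_atTop
  have hF := tendsto_avg_aux u₀ φ hφint hφc c hcpos hc0
  have hG := tendsto_avg_aux u₀ ψ hψint hψc c hcpos hc0
  have hJnn : ∀ n, 0 ≤ ∫ w in (u₀ - c n / 2)..(u₀ + c n / 2), ψ w := fun n =>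
    intervalIntegral.integral_nonneg (by linarith [hcpos n]) (fun x _ => hψ0 x)
  have key : Tendsto (fun n =>
      ((∫ w in (u₀ - c n / 2)..(u₀ + c n / 2), φ w) / c n) ^ 2 *
        ((d n)⁻¹ + 1)⁻¹ *
        ((d n)⁻¹ + (∫ w in (u₀ - c n / 2)..(u₀ + c n / 2), ψ w) / c n)⁻¹)
      atTop (nhds (φ u₀ ^ 2 * ((0:ℝ) + 1)⁻¹ * ((0:ℝ) + ψ u₀)⁻¹)) := by
    refine (((hF.pow 2).mul ((hinv.add tendsto_const_nhds).inv₀ (by norm_num))).mul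
      ((hinv.add hG).inv₀ ?_))
    simpa using hψpos.ne'
  have hval : φ u₀ ^ 2 * ((0:ℝ) + 1)⁻¹ * ((0:ℝ) + ψ u₀)⁻¹ = φ u₀ ^ 2 / ψ u₀ := by
    rw [zero_add, zero_add, inv_one, mul_one, div_eq_mul_inv]
  rw [hval] at key
  refine key.congr fun n => ?_
  set I := ∫ w in (u₀ - c n / 2)..(u₀ + c n / 2), φ w
  set J := ∫ w in (u₀ - c n / 2)..(u₀ + c n / 2), ψ w
  have hv : (0:ℝ) < c n := hcpos n
  have hEn := hE n
  have h1 : (0:ℝ) < 1 + c n * (Real.exp (a n) - 1) := by nlinarith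
  have h2 : (0:ℝ) < 1 + (Real.exp (a n) - 1) * J := by nlinarith [hJnn n]
  have hdn : d n = c n * (Real.exp (a n) - 1) := rfl
  have hvne : c n ≠ 0 := hv.ne'
  have hEne : Real.exp (a n) - 1 ≠ 0 := hEn.ne'
  have hde : c n * (Real.exp (a n) - 1) ≠ 0 := mul_ne_zero hvne hEne
  have e1 : (d n)⁻¹ + 1 = (1 + c n * (Real.exp (a n) - 1)) / (c n * (Real.exp (a n) - 1)) := by
    rw [hdn]; field_simp
  have e2 : (d n)⁻¹ + J / c n =
      (1 + (Real.exp (a n) - 1) * J) / (c n * (Real.exp (a n) - 1)) := by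
    rw [hdn]; field_simp
  rw [e1, e2, inv_div, inv_div]
  field_simp
end

section
/- Let k : ℝ → ℝ be nonnegative and Lebesgue integrable on (0,1). For c > 0 define M_c(u) := c⁻¹ ∫_{max(u − c/2, 0)}^{min(u + c/2, 1)} k(w) dw. Then for every measurable set S ⊆ (0,1), every c > 0 and every λ' > 0: ∫_S M_c(u) du ≤ ∫_{(0,1)} k(w)·1_{{w : k(w) ≥ λ'}}(w) dw + λ' · Leb(S), where Leb denotes Lebesgue measure. -/
open MeasureTheory

theorem maximal_average_uniform_integrability_bound
    (k : ℝ → ℝ) (hkm : Measurable k) (hk0 : ∀ x, 0 ≤ k x)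
    (hkint : IntegrableOn k (Set.Ioo (0 : ℝ) 1))
    (S : Set ℝ) (hS : MeasurableSet S) (hSsub : S ⊆ Set.Ioo (0 : ℝ) 1)
    (c : ℝ) (hc : 0 < c) (lam : ℝ) (hlam : 0 < lam) :
    ∫ u in S, c⁻¹ * ∫ w in (max (u - c / 2) 0)..(min (u + c / 2) 1), k w
      ≤ (∫ w in Set.Ioo (0 : ℝ) 1, Set.indicator {w : ℝ | lam ≤ k w} k w)
          + lam * (volume S).toReal := by
  classical
  -- truncated version of k
  set k' : ℝ → ℝ := (Set.Ioo (0:ℝ) 1).indicator k with hk'def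
  have hk'm : Measurable k' := hkm.indicator measurableSet_Ioo
  have hk'0 : ∀ x, 0 ≤ k' x := fun x => Set.indicator_nonneg (fun y _ => hk0 y) x
  have hk'int : Integrable k' := (integrable_indicator_iff measurableSet_Ioo).2 hkint
  set A : Set ℝ := {w : ℝ | lam ≤ k w} with hAdef
  have hA : MeasurableSet A := measurableSet_le measurable_const hkm
  set k1 : ℝ → ℝ := A.indicator k' with hk1def
  set k2 : ℝ → ℝ := Aᶜ.indicator k' with hk2def
  have hk1m : Measurable k1 := hk'm.indicator hA
  have hk2m : Measurable k2 := hk'm.indicator hA.compl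
  have hk10 : ∀ x, 0 ≤ k1 x := fun x => Set.indicator_nonneg (fun y _ => hk'0 y) x
  have hk20 : ∀ x, 0 ≤ k2 x := fun x => Set.indicator_nonneg (fun y _ => hk'0 y) x
  have hk12 : ∀ x, k1 x + k2 x = k' x := fun x => by
    simp [hk1def, hk2def, Set.indicator_apply]; by_cases h : x ∈ A <;> simp [h]
  have hk1int : Integrable k1 := hk'int.indicator hA
  have hk2int : Integrable k2 := hk'int.indicator hA.compl
  have hk2lam : ∀ x, k2 x ≤ lam := by
    intro x
    by_cases h : x ∈ A
    · simp [hk2def, Set.indicator_of_notMem (by simpa using h : x ∉ Aᶜ)]; exact hlam.le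
    · rw [hk2def]
      simp only [Set.indicator_apply, Set.mem_compl_iff, h, if_pos, not_false_iff, if_true]
      by_cases hx : x ∈ Set.Ioo (0:ℝ) 1
      · rw [hk'def, Set.indicator_of_mem hx]
        exact (not_le.1 h).le
      · rw [hk'def, Set.indicator_of_notMem hx]; exact hlam.le
  -- endpoints
  set a : ℝ → ℝ := fun u => max (u - c / 2) 0 with hadef
  set b : ℝ → ℝ := fun u => min (u + c / 2) 1 with hbdef
  have hab : ∀ u ∈ S, a u ≤ b u := by
    intro u hu
    obtain ⟨h0, h1⟩ := hSsub hu
    have : a u ≤ u := max_le (by linarith) h0.le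
    have : u ≤ b u := le_min (by linarith) h1.le
    linarith [max_le (by linarith : u - c/2 ≤ u) h0.le]
  have ha0 : ∀ u, 0 ≤ a u := fun u => le_max_right _ _
  have hb1 : ∀ u, b u ≤ 1 := fun u => min_le_right _ _
  have hIocsub : ∀ u, Set.Ioc (a u) (b u) ⊆ Set.Ioc (0:ℝ) 1 := by
    intro u w hw
    exact ⟨lt_of_le_of_lt (ha0 u) hw.1, hw.2.trans (hb1 u)⟩
  -- the interval integral of k equals the set integral of k' over Ioc (a u) (b u)
  have hae1 : ∀ᵐ w : ℝ, w ≠ (1:ℝ) := by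
    rw [ae_iff]
    simpa using (measure_singleton (1:ℝ) : volume ({1} : Set ℝ) = 0)
  have hfix : ∀ u ∈ S, (∫ w in (max (u - c / 2) 0)..(min (u + c / 2) 1), k w)
      = ∫ w in Set.Ioc (a u) (b u), k' w := by
    intro u hu
    rw [show (max (u - c / 2) 0) = a u from rfl, show (min (u + c / 2) 1) = b u from rfl,
      intervalIntegral.integral_of_le (hab u hu)]
    refine setIntegral_congr_ae measurableSet_Ioc ?_
    filter_upwards [hae1] with w hw hwIoc
    have hw1 : w ∈ Set.Ioo (0:ℝ) 1 := by
      rcases hIocsub u hwIoc with ⟨h0, h1⟩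
      exact ⟨h0, lt_of_le_of_ne h1 hw⟩
    rw [hk'def, Set.indicator_of_mem hw1]
  -- continuity of the averaged function via the primitive
  set G : ℝ → ℝ := fun x => ∫ w in (0:ℝ)..x, k' w with hGdef
  have hGcont : Continuous G := hk'int.continuous_primitive 0
  have hGsplit : ∀ u, a u ≤ b u → (∫ w in Set.Ioc (a u) (b u), k' w) = G (b u) - G (a u) := by
    intro u h
    rw [← intervalIntegral.integral_of_le h]
    have := intervalIntegral.integral_add_adjacent_intervals
      (hk'int.intervalIntegrable (a := 0) (b := a u))
      (hk'int.intervalIntegrable (a := a u) (b := b u))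
    rw [hGdef]; simp only []; linarith [this]
  set ψ : ℝ → ℝ := fun u => c⁻¹ * (G (b u) - G (a u)) with hψdef
  have hψcont : Continuous ψ := by
    apply continuous_const.mul
    apply Continuous.sub
    · exact hGcont.comp ((continuous_id.add continuous_const).min continuous_const)
    · exact hGcont.comp ((continuous_id.sub continuous_const).max continuous_const)
  -- the original integrand agrees with ψ on S
  have horig : ∀ u ∈ S,
      (c⁻¹ * ∫ w in (max (u - c / 2) 0)..(min (u + c / 2) 1), k w) = ψ u := by
    intro u hu
    rw [hfix u hu, hGsplit u (hab u hu)]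
  set J : ℝ → ENNReal := fun u => ∫⁻ w in Set.Ioc (a u) (b u), ENNReal.ofReal (k1 w)
    with hJdef
  have hψnn : ∀ u ∈ S, 0 ≤ ψ u := by
    intro u hu
    rw [hψdef]; simp only []
    rw [← hGsplit u (hab u hu)]
    exact mul_nonneg (inv_nonneg.2 hc.le) (setIntegral_nonneg measurableSet_Ioc
      fun w _ => hk'0 w)
  -- key pointwise bound
  have hkey : ∀ u ∈ S, ENNReal.ofReal (ψ u)
      ≤ ENNReal.ofReal c⁻¹ * J u + ENNReal.ofReal lam := by
    intro u hu
    have hsplit : (∫ w in Set.Ioc (a u) (b u), k' w)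
        = (∫ w in Set.Ioc (a u) (b u), k1 w) + ∫ w in Set.Ioc (a u) (b u), k2 w := by
      rw [← integral_add hk1int.integrableOn hk2int.integrableOn]
      simp only [hk12]
    have hvol : (volume (Set.Ioc (a u) (b u))).toReal = b u - a u := by
      rw [Real.volume_Ioc, ENNReal.toReal_ofReal (by linarith [hab u hu])]
    have hk2bound : (∫ w in Set.Ioc (a u) (b u), k2 w) ≤ lam * c := by
      have h1 : (∫ w in Set.Ioc (a u) (b u), k2 w)
          ≤ ∫ _ in Set.Ioc (a u) (b u), lam := by
        refine setIntegral_mono_on hk2int.integrableOn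
          (integrableOn_const (by rw [Real.volume_Ioc]; exact ENNReal.ofReal_ne_top))
          measurableSet_Ioc fun x _ => hk2lam x
      have h2 : (∫ _ in Set.Ioc (a u) (b u), lam) = (b u - a u) * lam := by
        rw [setIntegral_const, measureReal_def, hvol, smul_eq_mul]
      have hba : b u - a u ≤ c := by
        have h3 : b u ≤ u + c / 2 := min_le_left _ _
        have h4 : u - c / 2 ≤ a u := le_max_left _ _
        linarith
      calc (∫ w in Set.Ioc (a u) (b u), k2 w) ≤ (b u - a u) * lam := h2 ▸ h1
        _ ≤ lam * c := by nlinarith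
    have hψle : ψ u ≤ c⁻¹ * (∫ w in Set.Ioc (a u) (b u), k1 w) + lam := by
      have : ψ u = c⁻¹ * ∫ w in Set.Ioc (a u) (b u), k' w := by
        rw [hψdef]; simp only []; rw [← hGsplit u (hab u hu)]
      rw [this, hsplit, mul_add]
      have : c⁻¹ * (∫ w in Set.Ioc (a u) (b u), k2 w) ≤ lam := by
        have := mul_le_mul_of_nonneg_left hk2bound (inv_nonneg.2 hc.le)
        calc c⁻¹ * (∫ w in Set.Ioc (a u) (b u), k2 w) ≤ c⁻¹ * (lam * c) := this
          _ = lam := by field_simp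
      linarith
    calc ENNReal.ofReal (ψ u)
        ≤ ENNReal.ofReal (c⁻¹ * (∫ w in Set.Ioc (a u) (b u), k1 w) + lam) :=
          ENNReal.ofReal_le_ofReal hψle
      _ ≤ ENNReal.ofReal (c⁻¹ * (∫ w in Set.Ioc (a u) (b u), k1 w))
            + ENNReal.ofReal lam := ENNReal.ofReal_add_le
      _ = ENNReal.ofReal c⁻¹ * J u + ENNReal.ofReal lam := by
          rw [ENNReal.ofReal_mul (inv_nonneg.2 hc.le),
            ofReal_integral_eq_lintegral_ofReal hk1int.integrableOn
              (Filter.Eventually.of_forall hk10)]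
  -- Tonelli step
  set I1 : ENNReal := ∫⁻ w in Set.Ioc (0:ℝ) 1, ENNReal.ofReal (k1 w) with hI1def
  set T : Set (ℝ × ℝ) := {p | p.2 ∈ Set.Ioc (0:ℝ) 1 ∧ |p.1 - p.2| ≤ c/2} with hTdef
  have hT : MeasurableSet T := by
    have h1 : MeasurableSet {p : ℝ × ℝ | p.2 ∈ Set.Ioc (0:ℝ) 1} :=
      measurable_snd measurableSet_Ioc
    have h2 : MeasurableSet {p : ℝ × ℝ | |p.1 - p.2| ≤ c/2} :=
      (isClosed_le (continuous_abs.comp (continuous_fst.sub continuous_snd))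
        continuous_const).measurableSet
    exact h1.inter h2
  set H : ℝ → ℝ → ENNReal :=
    fun u w => T.indicator (fun p => ENNReal.ofReal (k1 p.2)) (u, w) with hHdef
  have hJH : ∀ u, J u ≤ ∫⁻ w, H u w := by
    intro u
    rw [hJdef]; simp only []
    rw [← lintegral_indicator measurableSet_Ioc]
    refine lintegral_mono fun w => ?_
    by_cases hw : w ∈ Set.Ioc (a u) (b u)
    · rw [Set.indicator_of_mem hw]
      have hmem : (u, w) ∈ T := by
        refine ⟨hIocsub u hw, abs_le.2 ⟨?_, ?_⟩⟩
        · have : w ≤ b u := hw.2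
          have : b u ≤ u + c / 2 := min_le_left _ _
          linarith [hw.2, min_le_left (u + c/2) (1:ℝ)]
        · have : u - c / 2 ≤ a u := le_max_left _ _
          linarith [hw.1]
      rw [hHdef]; simp only []
      rw [Set.indicator_of_mem hmem]
    · rw [Set.indicator_of_notMem hw]
      exact zero_le
  have hHm : Measurable (Function.uncurry H) := by
    have : Function.uncurry H = T.indicator (fun p => ENNReal.ofReal (k1 p.2)) := by
      funext p; cases p; rfl
    rw [this]
    exact Measurable.indicator (ENNReal.measurable_ofReal.comp (hk1m.comp measurable_snd)) hT
  have hswap : (∫⁻ u in S, ∫⁻ w, H u w) = ∫⁻ w, ∫⁻ u in S, H u w :=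
    lintegral_lintegral_swap hHm.aemeasurable
  have hinner : ∀ w, (∫⁻ u in S, H u w)
      ≤ (Set.Ioc (0:ℝ) 1).indicator
          (fun w => ENNReal.ofReal (k1 w) * ENNReal.ofReal c) w := by
    intro w
    have hBmeas : MeasurableSet {u : ℝ | (u, w) ∈ T} :=
      (measurable_id.prodMk measurable_const) hT
    have hHrep : ∀ u, H u w
        = Set.indicator {u : ℝ | (u, w) ∈ T} (fun _ => ENNReal.ofReal (k1 w)) u := by
      intro u
      by_cases h : (u, w) ∈ T
      · rw [hHdef]; simp only []
        rw [Set.indicator_of_mem h,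
          Set.indicator_of_mem (show u ∈ {u : ℝ | (u, w) ∈ T} from h)]
      · rw [hHdef]; simp only []
        rw [Set.indicator_of_notMem h,
          Set.indicator_of_notMem (show u ∉ {u : ℝ | (u, w) ∈ T} from h)]
    by_cases hw : w ∈ Set.Ioc (0:ℝ) 1
    · rw [Set.indicator_of_mem hw]
      have hcalc : (∫⁻ u in S, H u w)
          = ENNReal.ofReal (k1 w) * (volume.restrict S) {u : ℝ | (u, w) ∈ T} := by
        simp_rw [hHrep]
        exact lintegral_indicator_const hBmeas _
      rw [hcalc]
      refine mul_le_mul_right ?_ _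
      have hsub : {u : ℝ | (u, w) ∈ T} ⊆ Set.Icc (w - c/2) (w + c/2) := by
        intro u hu
        have h := abs_le.1 hu.2
        exact ⟨by linarith [h.2], by linarith [h.1]⟩
      calc (volume.restrict S) {u : ℝ | (u, w) ∈ T}
          ≤ volume {u : ℝ | (u, w) ∈ T} := Measure.restrict_le_self _
        _ ≤ volume (Set.Icc (w - c/2) (w + c/2)) := measure_mono hsub
        _ = ENNReal.ofReal c := by rw [Real.volume_Icc]; ring_nf
    · rw [Set.indicator_of_notMem hw]
      have : ∀ u, H u w = 0 := by
        intro u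
        rw [hHdef]; simp only []
        exact Set.indicator_of_notMem (fun h => hw h.1) _
      simp [this]
  have hTon : (∫⁻ u in S, J u) ≤ I1 * ENNReal.ofReal c := by
    calc (∫⁻ u in S, J u) ≤ ∫⁻ u in S, ∫⁻ w, H u w := lintegral_mono hJH
      _ = ∫⁻ w, ∫⁻ u in S, H u w := hswap
      _ ≤ ∫⁻ w, (Set.Ioc (0:ℝ) 1).indicator
            (fun w => ENNReal.ofReal (k1 w) * ENNReal.ofReal c) w := lintegral_mono hinner
      _ = ∫⁻ w in Set.Ioc (0:ℝ) 1, ENNReal.ofReal (k1 w) * ENNReal.ofReal c :=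
          lintegral_indicator measurableSet_Ioc _
      _ = I1 * ENNReal.ofReal c := lintegral_mul_const' _ _ ENNReal.ofReal_ne_top
  -- assemble the lintegral bound
  have hmain : (∫⁻ u in S, ENNReal.ofReal (ψ u))
      ≤ I1 + ENNReal.ofReal lam * volume S := by
    calc (∫⁻ u in S, ENNReal.ofReal (ψ u))
        ≤ ∫⁻ u in S, (ENNReal.ofReal c⁻¹ * J u + ENNReal.ofReal lam) :=
          lintegral_mono_ae ((ae_restrict_iff' hS).2 (Filter.Eventually.of_forall hkey))
      _ = (∫⁻ u in S, ENNReal.ofReal c⁻¹ * J u) + ENNReal.ofReal lam * volume S := by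
          rw [lintegral_add_right _ measurable_const, setLIntegral_const]
      _ = ENNReal.ofReal c⁻¹ * (∫⁻ u in S, J u) + ENNReal.ofReal lam * volume S := by
          rw [lintegral_const_mul' _ _ ENNReal.ofReal_ne_top]
      _ ≤ ENNReal.ofReal c⁻¹ * (I1 * ENNReal.ofReal c) + ENNReal.ofReal lam * volume S :=
          add_le_add (mul_le_mul_right hTon _) le_rfl
      _ = I1 + ENNReal.ofReal lam * volume S := by
          rw [mul_comm I1, ← mul_assoc, ← ENNReal.ofReal_mul (inv_nonneg.2 hc.le),
            inv_mul_cancel₀ hc.ne', ENNReal.ofReal_one, one_mul]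
  -- finiteness
  have hI1rep : I1 = ENNReal.ofReal (∫ w in Set.Ioc (0:ℝ) 1, k1 w) :=
    (ofReal_integral_eq_lintegral_ofReal hk1int.integrableOn
      (Filter.Eventually.of_forall hk10)).symm
  have hI1ne : I1 ≠ ⊤ := by rw [hI1rep]; exact ENNReal.ofReal_ne_top
  have hvolS : volume S ≠ ⊤ := by
    refine ne_top_of_le_ne_top ?_ (measure_mono hSsub)
    rw [Real.volume_Ioo]
    exact ENNReal.ofReal_ne_top
  -- conclude
  rw [setIntegral_congr_fun hS (fun u hu => horig u hu)]
  rw [integral_eq_lintegral_of_nonneg_ae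
    ((ae_restrict_iff' hS).2 (Filter.Eventually.of_forall hψnn))
    hψcont.aestronglyMeasurable.restrict]
  have hfin : ENNReal.ofReal lam * volume S ≠ ⊤ :=
    ENNReal.mul_ne_top ENNReal.ofReal_ne_top hvolS
  refine le_trans (ENNReal.toReal_mono (by exact ENNReal.add_ne_top.2 ⟨hI1ne, hfin⟩) hmain) ?_
  rw [ENNReal.toReal_add hI1ne hfin, ENNReal.toReal_mul, ENNReal.toReal_ofReal hlam.le]
  have hI1val : I1.toReal = ∫ w in Set.Ioo (0:ℝ) 1, Set.indicator A k w := by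
    rw [hI1rep, ENNReal.toReal_ofReal
      (setIntegral_nonneg measurableSet_Ioc fun w _ => hk10 w)]
    rw [integral_Ioc_eq_integral_Ioo]
    refine setIntegral_congr_fun measurableSet_Ioo fun w hw => ?_
    rw [hk1def]
    by_cases h : w ∈ A
    · rw [Set.indicator_of_mem h, Set.indicator_of_mem h, hk'def, Set.indicator_of_mem hw]
    · rw [Set.indicator_of_notMem h, Set.indicator_of_notMem h]
  rw [hI1val]
end
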